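/- Fix ρ ≥ 0 and η ≥ 0. On the open set {q ≥ 0 : σ(q,ρ) > 0}, the map q ↦ p²(q,ρ,η) is differentiable and its derivative equals u²q ∫_{ℝ^ν} (2π)^{−ν} |λ(k)|² { (e^{β E(k,q,ρ)} − 1)^{−1} + 1/2 } / E(k,q,ρ) dk + u η²/(f(0,ρ) − uq)² − uq. -/

import Mathlib

/-!
Differentiation under the integral sign. Write `S = σ(q,ρ)`. Since `f(k,ρ) = ε(k) + S + |u|q`
and `|λ| ≤ 1`, on the ball of radius `S / (2(|u| + 1))` around `q` the energy `E(k,s,ρ)` stays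
above `S/2`, so the `s`-derivative `u² s |λ(k)|² ((e^{βE} − 1)⁻¹ + 1/2) / E` of the integrand is
bounded by a constant times `|λ(k)|²`, which is integrable by the decay of `λ`. At `q` itself the
integrand is integrable: `E ≥ ε(k) + S` bounds the Bose term by a Gaussian in `k`, and
`0 ≤ f − E ≤ u²q²|λ|²/(2S)`. The other terms of `p²(q,ρ,η)` are elementary.
-/

open MeasureTheory Real Filter Topology

noncomputable section

namespace PB

abbrev Kspace (ν : ℕ) : Type := EuclideanSpace ℝ (Fin ν)

/-- kinetic energy `ε(k) = ‖k‖²/(2m)` -/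
def eps (ν : ℕ) (m : ℝ) (k : Kspace ν) : ℝ := ‖k‖ ^ 2 / (2 * m)

/-- `f(k,ρ) = ε(k) − μ + vρ` -/
def fF (ν : ℕ) (m μ v : ℝ) (k : Kspace ν) (ρ : ℝ) : ℝ := eps ν m k - μ + v * ρ

/-- `E(k,q,ρ) = (f(k,ρ)² − u²q²|λ(k)|²)^{1/2}` -/
def eE (ν : ℕ) (m μ v u : ℝ) (lam : Kspace ν → ℂ) (k : Kspace ν) (q ρ : ℝ) : ℝ :=
  Real.sqrt (fF ν m μ v k ρ ^ 2 - u ^ 2 * q ^ 2 * ‖lam k‖ ^ 2)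

/-- `σ(q,ρ) = vρ − μ − |u|q` -/
def sigma0 (μ v u q ρ : ℝ) : ℝ := v * ρ - μ - |u| * q

/-- The point `(2π/L)·z` of the dual lattice `Λ* = (2π/L)ℤ^ν`. -/
def latticePt (ν : ℕ) (L : ℝ) (z : Fin ν → ℤ) : Kspace ν :=
  (WithLp.equiv 2 (Fin ν → ℝ)).symm fun i => (2 * π / L) * (z i : ℝ)

/-- integrand of the limiting approximating pressure -/
def p2Int (ν : ℕ) (m μ v u β : ℝ) (lam : Kspace ν → ℂ) (q ρ : ℝ) (k : Kspace ν) : ℝ :=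
  -β⁻¹ * Real.log (1 - Real.exp (-β * eE ν m μ v u lam k q ρ))
    - (eE ν m μ v u lam k q ρ - fF ν m μ v k ρ) / 2

/-- `p²(q,ρ)`, the limiting approximating pressure -/
def p2 (ν : ℕ) (m μ v u β : ℝ) (lam : Kspace ν → ℂ) (q ρ : ℝ) : ℝ :=
  (∫ k : Kspace ν, ((2 * π) ^ ν)⁻¹ * p2Int ν m μ v u β lam q ρ k)
    - u / 2 * q ^ 2 + v / 2 * ρ ^ 2

/-- `p²(q,ρ,η) = p²(q,ρ) + η²/(f(0,ρ) − uq)` -/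
def p2eta (ν : ℕ) (m μ v u β : ℝ) (lam : Kspace ν → ℂ) (q ρ η : ℝ) : ℝ :=
  p2 ν m μ v u β lam q ρ + η ^ 2 / (fF ν m μ v 0 ρ - u * q)

/-- `p²_Λ(q,ρ)`, the finite-volume approximating pressure (cube of side `L`, `V = L^ν`) -/
def p2L (ν : ℕ) (m μ v u β L : ℝ) (lam : Kspace ν → ℂ) (q ρ : ℝ) : ℝ :=
  -(β * L ^ ν)⁻¹ *
      (∑' z : Fin ν → ℤ,
        Real.log (1 - Real.exp (-β * eE ν m μ v u lam (latticePt ν L z) q ρ)))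
    - (2 * L ^ ν)⁻¹ *
      (∑' z : Fin ν → ℤ,
        (eE ν m μ v u lam (latticePt ν L z) q ρ - fF ν m μ v (latticePt ν L z) ρ))
    - u / 2 * q ^ 2 + v / 2 * ρ ^ 2

/-- `p²_Λ(q,ρ,η) = p²_Λ(q,ρ) + η²/(f(0,ρ) − uq)` -/
def p2Leta (ν : ℕ) (m μ v u β L : ℝ) (lam : Kspace ν → ℂ) (q ρ η : ℝ) : ℝ :=
  p2L ν m μ v u β L lam q ρ + η ^ 2 / (fF ν m μ v 0 ρ - u * q)

theorem one_add_rpow_le_two_rpow_mul {t s : ℝ} (ht : 0 ≤ t) (hs : 0 ≤ s) :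
    (1 + t) ^ s ≤ 2 ^ s * (1 + t ^ s) := by
  rcases le_total t 1 with h | h
  · calc (1 + t) ^ s ≤ 2 ^ s := rpow_le_rpow (by positivity) (by linarith) hs
      _ ≤ 2 ^ s * (1 + t ^ s) := le_mul_of_one_le_right (by positivity) (by simp; positivity)
  · calc (1 + t) ^ s ≤ (2 * t) ^ s := rpow_le_rpow (by positivity) (by linarith) hs
      _ = 2 ^ s * t ^ s := mul_rpow (by norm_num) ht
      _ ≤ 2 ^ s * (1 + t ^ s) := by gcongr; linarith

theorem integrable_inv_one_add_norm_rpow {E : Type*} [NormedAddCommGroup E]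
    [InnerProductSpace ℝ E] [FiniteDimensional ℝ E] [MeasurableSpace E] [BorelSpace E]
    {μ : Measure E} [μ.IsAddHaarMeasure] {s : ℝ} (hs : (Module.finrank ℝ E : ℝ) < s) :
    Integrable (fun x : E => (1 + ‖x‖ ^ s)⁻¹) μ := by
  have hs0 : 0 ≤ s := (Nat.cast_nonneg _).trans hs.le
  refine ((integrable_one_add_norm hs).const_mul (2 ^ s)).mono' (by fun_prop)
    (Eventually.of_forall fun x => ?_)
  rw [norm_inv, Real.norm_of_nonneg (by positivity), rpow_neg (by positivity),
    ← div_eq_mul_inv, le_div_iff₀ (by positivity), inv_mul_le_iff₀ (by positivity), mul_comm]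
  exact one_add_rpow_le_two_rpow_mul (norm_nonneg x) hs0

theorem integrable_norm_sq_of_norm_le_one {α F : Type*} [MeasurableSpace α] {μ : Measure α}
    [NormedAddCommGroup F] {f : α → F} (hf : Integrable f μ) (h1 : ∀ a, ‖f a‖ ≤ 1) :
    Integrable (fun a => ‖f a‖ ^ 2) μ :=
  hf.norm.mono' (hf.norm.aestronglyMeasurable.pow 2) <| Eventually.of_forall fun a => by
    rw [norm_pow, norm_norm]
    exact pow_le_of_le_one (norm_nonneg _) (h1 a) two_ne_zero

theorem integrable_exp_neg_mul_sq_norm {E : Type*} [NormedAddCommGroup E]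
    [InnerProductSpace ℝ E] [FiniteDimensional ℝ E] [MeasurableSpace E] [BorelSpace E]
    {b : ℝ} (hb : 0 < b) : Integrable (fun x : E => exp (-b * ‖x‖ ^ 2)) := by
  refine Integrable.of_integral_ne_zero ?_
  rw [GaussianFourier.integral_rexp_neg_mul_sq_norm hb]
  positivity

theorem abs_log_one_sub_exp_neg_le {y₀ y : ℝ} (hy₀ : 0 < y₀) (hy : y₀ ≤ y) :
    |log (1 - exp (-y))| ≤ exp (-y) / (1 - exp (-y₀)) := by
  have ht₀ : exp (-y₀) < 1 := exp_lt_one_iff.2 (by linarith)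
  have ht : exp (-y) ≤ exp (-y₀) := exp_le_exp.2 (by linarith)
  have hpos : 0 < 1 - exp (-y) := by linarith
  have hlog := one_sub_inv_le_log_of_pos hpos
  rw [abs_of_nonpos (log_nonpos hpos.le (by linarith [exp_pos (-y)]))]
  calc -log (1 - exp (-y)) ≤ exp (-y) / (1 - exp (-y)) := by
        have : exp (-y) / (1 - exp (-y)) = (1 - exp (-y))⁻¹ - 1 := by field_simp; ring
        linarith
    _ ≤ exp (-y) / (1 - exp (-y₀)) := by gcongr

theorem inv_exp_sub_one_le_inv {y : ℝ} (hy : 0 < y) : (exp y - 1)⁻¹ ≤ y⁻¹ :=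
  inv_anti₀ hy (by linarith [add_one_le_exp y])

theorem hasDerivAt_neg_inv_mul_log_one_sub_exp {β E : ℝ} (hβ : 0 < β) (hE : 0 < E) :
    HasDerivAt (fun E => -β⁻¹ * log (1 - exp (-β * E))) (-(exp (β * E) - 1)⁻¹) E := by
  have hlt : exp (-β * E) < 1 := exp_lt_one_iff.2 (by nlinarith)
  have h := ((((hasDerivAt_id E).const_mul (-β)).exp).const_sub 1).log
    (by simp only [id]; linarith : 1 - exp (-β * id E) ≠ 0) |>.const_mul (-β⁻¹)
  refine h.congr_deriv ?_
  have hexp : exp (-β * E) = (exp (β * E))⁻¹ := by rw [← exp_neg]; ring_nf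
  have h1 : 1 < exp (β * E) := one_lt_exp_iff.2 (by positivity)
  simp only [id, hexp]
  field_simp

theorem sq_le_sq_sub_sq_mul {f w d l : ℝ} (hd : 0 ≤ d) (hw : 0 ≤ w) (h : w + d ≤ f)
    (hl₁ : l ≤ 1) : d ^ 2 ≤ f ^ 2 - w ^ 2 * l := by
  nlinarith [mul_le_mul_of_nonneg_left hl₁ (sq_nonneg w)]

section Integrand

variable {ν : ℕ} {m μ v u β : ℝ} {lam : Kspace ν → ℂ} {ρ : ℝ}

theorem eps_nonneg (hm : 0 ≤ m) (k : Kspace ν) : 0 ≤ eps ν m k := by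
  unfold eps; positivity

theorem fF_eq_eps_add_sigma0 (k : Kspace ν) (q : ℝ) :
    fF ν m μ v k ρ = eps ν m k + sigma0 μ v u q ρ + |u| * q := by
  simp only [fF, sigma0]; ring

theorem sq_le_radicand_eE {k : Kspace ν} {x d : ℝ} (hd : 0 ≤ d) (hlam : ‖lam k‖ ≤ 1)
    (h : |u| * |x| + d ≤ fF ν m μ v k ρ) :
    d ^ 2 ≤ fF ν m μ v k ρ ^ 2 - u ^ 2 * x ^ 2 * ‖lam k‖ ^ 2 := by
  rw [← sq_abs u, ← sq_abs x, ← mul_pow]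
  exact sq_le_sq_sub_sq_mul hd (by positivity) h (pow_le_one₀ (norm_nonneg _) hlam)

theorem le_eE {k : Kspace ν} {x d : ℝ} (hd : 0 ≤ d) (hlam : ‖lam k‖ ≤ 1)
    (h : |u| * |x| + d ≤ fF ν m μ v k ρ) : d ≤ eE ν m μ v u lam k x ρ :=
  le_sqrt_of_sq_le (sq_le_radicand_eE hd hlam h)

theorem abs_eE_sub_fF_le {k : Kspace ν} {x d : ℝ} (hd : 0 < d) (hlam : ‖lam k‖ ≤ 1)
    (h : |u| * |x| + d ≤ fF ν m μ v k ρ) :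
    |eE ν m μ v u lam k x ρ - fF ν m μ v k ρ| ≤ u ^ 2 * x ^ 2 * ‖lam k‖ ^ 2 / (2 * d) := by
  have hE : d ≤ eE ν m μ v u lam k x ρ := le_eE hd.le hlam h
  have hf : d ≤ fF ν m μ v k ρ := by nlinarith [abs_nonneg u, abs_nonneg x]
  have hE2 : eE ν m μ v u lam k x ρ ^ 2 = fF ν m μ v k ρ ^ 2 - u ^ 2 * x ^ 2 * ‖lam k‖ ^ 2 :=
    sq_sqrt ((sq_nonneg d).trans (sq_le_radicand_eE hd.le hlam h))
  have hEf : eE ν m μ v u lam k x ρ ≤ fF ν m μ v k ρ := by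
    nlinarith [sq_nonneg (u * x * ‖lam k‖)]
  rw [abs_sub_comm, abs_of_nonneg (by linarith), le_div_iff₀ (by positivity)]
  nlinarith

theorem hasDerivAt_eE {k : Kspace ν} {x : ℝ}
    (hpos : 0 < fF ν m μ v k ρ ^ 2 - u ^ 2 * x ^ 2 * ‖lam k‖ ^ 2) :
    HasDerivAt (fun s => eE ν m μ v u lam k s ρ)
      (-(u ^ 2 * x * ‖lam k‖ ^ 2) / eE ν m μ v u lam k x ρ) x := by
  have h := (((hasDerivAt_pow 2 x).const_mul (u ^ 2)).mul_const (‖lam k‖ ^ 2)).const_sub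
    (fF ν m μ v k ρ ^ 2) |>.sqrt hpos.ne'
  refine h.congr_deriv ?_
  unfold eE
  push_cast
  ring

def p2IntDeriv (ν : ℕ) (m μ v u β : ℝ) (lam : Kspace ν → ℂ) (q ρ : ℝ) (k : Kspace ν) : ℝ :=
  ‖lam k‖ ^ 2 * ((exp (β * eE ν m μ v u lam k q ρ) - 1)⁻¹ + 1 / 2) / eE ν m μ v u lam k q ρ

theorem hasDerivAt_p2Int (hβ : 0 < β) {k : Kspace ν} {x : ℝ}
    (hpos : 0 < fF ν m μ v k ρ ^ 2 - u ^ 2 * x ^ 2 * ‖lam k‖ ^ 2) :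
    HasDerivAt (fun s => p2Int ν m μ v u β lam s ρ k)
      (u ^ 2 * x * p2IntDeriv ν m μ v u β lam x ρ k) x := by
  have hE : 0 < eE ν m μ v u lam k x ρ := sqrt_pos.2 hpos
  have hφ : HasDerivAt (fun E => -β⁻¹ * log (1 - exp (-β * E)) - E / 2)
      (-(exp (β * eE ν m μ v u lam k x ρ) - 1)⁻¹ - 1 / 2) (eE ν m μ v u lam k x ρ) :=
    (hasDerivAt_neg_inv_mul_log_one_sub_exp hβ hE).sub ((hasDerivAt_id' _).div_const 2)
  have h := (hφ.comp x (hasDerivAt_eE hpos)).add_const (fF ν m μ v k ρ / 2)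
  have hfun : (fun s => p2Int ν m μ v u β lam s ρ k) = fun s =>
      ((fun E => -β⁻¹ * log (1 - exp (-β * E)) - E / 2) ∘ fun s => eE ν m μ v u lam k s ρ) s
        + fF ν m μ v k ρ / 2 := by
    funext s
    simp only [p2Int, Function.comp]
    ring
  rw [hfun]
  refine h.congr_deriv ?_
  rw [p2IntDeriv]
  field_simp
  ring

theorem abs_p2IntDeriv_le (hβ : 0 < β) {k : Kspace ν} {x d : ℝ} (hd : 0 < d)
    (hE : d ≤ eE ν m μ v u lam k x ρ) :
    |p2IntDeriv ν m μ v u β lam x ρ k| ≤ ((β * d)⁻¹ + 1 / 2) / d * ‖lam k‖ ^ 2 := by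
  have hE0 : 0 < eE ν m μ v u lam k x ρ := hd.trans_le hE
  have hβE : 0 < β * eE ν m μ v u lam k x ρ := mul_pos hβ hE0
  have hW : 0 < (exp (β * eE ν m μ v u lam k x ρ) - 1)⁻¹ :=
    inv_pos.2 (by linarith [add_one_le_exp (β * eE ν m μ v u lam k x ρ)])
  have hWd : (exp (β * eE ν m μ v u lam k x ρ) - 1)⁻¹ ≤ (β * d)⁻¹ :=
    (inv_exp_sub_one_le_inv hβE).trans (inv_anti₀ (by positivity) (by gcongr))
  rw [p2IntDeriv, abs_of_nonneg (div_nonneg (mul_nonneg (by positivity) (by linarith)) hE0.le),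
    mul_div_assoc, mul_comm]
  gcongr

theorem abs_p2Int_le (hm : 0 < m) (hβ : 0 < β) {k : Kspace ν} {q : ℝ} (hlam : ‖lam k‖ ≤ 1)
    (hq : 0 ≤ q) (hσ : 0 < sigma0 μ v u q ρ) :
    |p2Int ν m μ v u β lam q ρ k| ≤
      β⁻¹ / (1 - exp (-(β * sigma0 μ v u q ρ))) * exp (-(β / (2 * m)) * ‖k‖ ^ 2)
        + u ^ 2 * q ^ 2 / (4 * sigma0 μ v u q ρ) * ‖lam k‖ ^ 2 := by
  set S := sigma0 μ v u q ρ
  set E := eE ν m μ v u lam k q ρ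
  have hf : fF ν m μ v k ρ = eps ν m k + S + |u| * q := fF_eq_eps_add_sigma0 k q
  have hε := eps_nonneg hm.le k
  have hEε : eps ν m k + S ≤ E := le_eE (by linarith) hlam (by rw [abs_of_nonneg hq]; linarith)
  have hlog := abs_log_one_sub_exp_neg_le (mul_pos hβ hσ)
    (mul_le_mul_of_nonneg_left (show S ≤ E by linarith) hβ.le)
  have hexp : exp (-(β * E)) ≤ exp (-(β / (2 * m)) * ‖k‖ ^ 2) := by
    rw [exp_le_exp, neg_mul, neg_le_neg_iff, div_mul_eq_mul_div, mul_div_assoc]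
    exact mul_le_mul_of_nonneg_left (show eps ν m k ≤ E by linarith) hβ.le
  have hEf : |E - fF ν m μ v k ρ| ≤ u ^ 2 * q ^ 2 * ‖lam k‖ ^ 2 / (2 * S) :=
    abs_eE_sub_fF_le hσ hlam (by rw [abs_of_nonneg hq, hf]; linarith)
  have hS1 : 0 < 1 - exp (-(β * S)) := sub_pos.2 (exp_lt_one_iff.2 (by nlinarith))
  calc |p2Int ν m μ v u β lam q ρ k|
      ≤ β⁻¹ * |log (1 - exp (-(β * E)))| + |E - fF ν m μ v k ρ| / 2 := by
        rw [p2Int, neg_mul β]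
        refine (abs_sub _ _).trans ?_
        rw [abs_mul, abs_neg, abs_inv, abs_of_pos hβ, abs_div, abs_two]
    _ ≤ β⁻¹ * (exp (-(β / (2 * m)) * ‖k‖ ^ 2) / (1 - exp (-(β * S))))
        + u ^ 2 * q ^ 2 * ‖lam k‖ ^ 2 / (2 * S) / 2 := by
        gcongr
        exact hlog.trans (by gcongr)
    _ = _ := by ring

theorem measurable_eE (hmeas : Measurable lam) (x : ℝ) :
    Measurable fun k => eE ν m μ v u lam k x ρ := by
  unfold eE fF eps; fun_prop

theorem measurable_p2Int (hmeas : Measurable lam) (x : ℝ) :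
    Measurable fun k => p2Int ν m μ v u β lam x ρ k := by
  have := measurable_eE (m := m) (μ := μ) (v := v) (u := u) (ρ := ρ) hmeas x
  unfold p2Int fF eps; fun_prop

theorem measurable_p2IntDeriv (hmeas : Measurable lam) (x : ℝ) :
    Measurable fun k => p2IntDeriv ν m μ v u β lam x ρ k := by
  have := measurable_eE (m := m) (μ := μ) (v := v) (u := u) (ρ := ρ) hmeas x
  unfold p2IntDeriv; fun_prop

theorem integrable_p2Int (hm : 0 < m) (hβ : 0 < β) (hmeas : Measurable lam)
    (hlam : ∀ k, ‖lam k‖ ≤ 1) (hlam2 : Integrable fun k => ‖lam k‖ ^ 2) {q : ℝ} (hq : 0 ≤ q)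
    (hσ : 0 < sigma0 μ v u q ρ) : Integrable fun k => p2Int ν m μ v u β lam q ρ k :=
  (((integrable_exp_neg_mul_sq_norm (by positivity)).const_mul _).add (hlam2.const_mul _)).mono'
    (measurable_p2Int hmeas q).aestronglyMeasurable
    (ae_of_all _ fun k => abs_p2Int_le hm hβ (hlam k) hq hσ)

theorem hasDerivAt_integral_p2Int (hm : 0 < m) (hβ : 0 < β) (hmeas : Measurable lam)
    (hlam : ∀ k, ‖lam k‖ ≤ 1) (hlam2 : Integrable fun k => ‖lam k‖ ^ 2) {q : ℝ} (hq : 0 ≤ q)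
    (hσ : 0 < sigma0 μ v u q ρ) :
    HasDerivAt (fun s => ∫ k, p2Int ν m μ v u β lam s ρ k)
      (u ^ 2 * q * ∫ k, p2IntDeriv ν m μ v u β lam q ρ k) q := by
  set S := sigma0 μ v u q ρ
  set r := S / (2 * (|u| + 1))
  have hr : 0 < r := by positivity
  have hur : |u| * r ≤ S / 2 := by
    rw [mul_div_assoc', div_le_div_iff₀ (by positivity) two_pos]
    nlinarith [abs_nonneg u]
  have hS2 : 0 < S / 2 := by positivity
  have hx : ∀ x ∈ Metric.ball q r, |x| ≤ q + r := fun x hx => by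
    rw [Metric.mem_ball, Real.dist_eq] at hx
    linarith [abs_sub_abs_le_abs_sub x q, abs_of_nonneg hq]
  have hball : ∀ x ∈ Metric.ball q r, ∀ k, |u| * |x| + S / 2 ≤ fF ν m μ v k ρ := by
    intro x hx' k
    have hf : fF ν m μ v k ρ = eps ν m k + S + |u| * q := fF_eq_eps_add_sigma0 k q
    nlinarith [eps_nonneg hm.le k, mul_le_mul_of_nonneg_left (hx x hx') (abs_nonneg u)]
  have hbound : ∀ k, ∀ x ∈ Metric.ball q r, ‖u ^ 2 * x * p2IntDeriv ν m μ v u β lam x ρ k‖ ≤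
      u ^ 2 * (q + r) * (((β * (S / 2))⁻¹ + 1 / 2) / (S / 2) * ‖lam k‖ ^ 2) := by
    intro k x hx'
    rw [Real.norm_eq_abs, abs_mul, abs_mul, abs_of_nonneg (sq_nonneg u)]
    gcongr
    · exact hx x hx'
    · exact abs_p2IntDeriv_le hβ hS2 (le_eE hS2.le (hlam k) (hball x hx' k))
  have hderiv := hasDerivAt_integral_of_dominated_loc_of_deriv_le
    (Metric.ball_mem_nhds q hr)
    (Eventually.of_forall fun x => (measurable_p2Int hmeas x).aestronglyMeasurable)
    (integrable_p2Int hm hβ hmeas hlam hlam2 hq hσ)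
    ((measurable_p2IntDeriv hmeas q).const_mul _).aestronglyMeasurable
    (ae_of_all _ hbound) ((hlam2.const_mul _).const_mul _)
    (ae_of_all _ fun k x hx => hasDerivAt_p2Int hβ
      ((pow_pos hS2 2).trans_le (sq_le_radicand_eE hS2.le (hlam k) (hball x hx k))))
  rw [← integral_const_mul]
  exact hderiv.2

end Integrand

theorem statement7_general
    (ν : ℕ) (m β μ u v : ℝ) (hm : 0 < m) (hβ : 0 < β)
    (lam : Kspace ν → ℂ) (hmeas : Measurable lam)
    (hlam1 : ∀ k, ‖lam k‖ ≤ 1)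
    (c δ : ℝ) (hδ : 0 < δ)
    (hdec : ∀ k : Kspace ν, ‖lam k‖ ≤ c / (1 + ‖k‖ ^ (max (ν : ℝ) ((ν : ℝ) / 2 + 1) + δ)))
    (ρ : ℝ) (η : ℝ) :
    ∀ q : ℝ, 0 ≤ q → 0 < sigma0 μ v u q ρ →
      HasDerivAt (fun s : ℝ => p2eta ν m μ v u β lam s ρ η)
        (u ^ 2 * q * (∫ k : Kspace ν, ((2 * π) ^ ν)⁻¹ *
            (‖lam k‖ ^ 2 *
              ((Real.exp (β * eE ν m μ v u lam k q ρ) - 1)⁻¹ + 1 / 2) /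
                eE ν m μ v u lam k q ρ))
          + u * η ^ 2 / (fF ν m μ v 0 ρ - u * q) ^ 2 - u * q) q := by
  intro q hq hσ
  have hs : (Module.finrank ℝ (Kspace ν) : ℝ) < max (ν : ℝ) ((ν : ℝ) / 2 + 1) + δ := by
    rw [finrank_euclideanSpace_fin]
    linarith [le_max_left (ν : ℝ) ((ν : ℝ) / 2 + 1)]
  have hlam : Integrable lam :=
    ((integrable_inv_one_add_norm_rpow hs).const_mul c).mono' hmeas.aestronglyMeasurable
      (ae_of_all _ fun k => (hdec k).trans_eq (div_eq_mul_inv _ _))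
  have hpole_pos : 0 < fF ν m μ v 0 ρ - u * q := by
    rw [fF_eq_eps_add_sigma0 0 q]
    linarith [eps_nonneg (ν := ν) hm.le 0, mul_le_mul_of_nonneg_right (le_abs_self u) hq]
  have hpole := (hasDerivAt_const q (η ^ 2)).div
    (((hasDerivAt_id' q).const_mul u).const_sub (fF ν m μ v 0 ρ)) hpole_pos.ne'
  have h := ((((hasDerivAt_integral_p2Int hm hβ hmeas hlam1
    (integrable_norm_sq_of_norm_le_one hlam hlam1) hq hσ).const_mul ((2 * π) ^ ν)⁻¹).sub
      ((hasDerivAt_pow 2 q).const_mul (u / 2))).add_const (v / 2 * ρ ^ 2)).add hpole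
  have hfun : (fun s => p2eta ν m μ v u β lam s ρ η) = fun s =>
      ((2 * π) ^ ν)⁻¹ * (∫ k, p2Int ν m μ v u β lam s ρ k) - u / 2 * s ^ 2 + v / 2 * ρ ^ 2
        + η ^ 2 / (fF ν m μ v 0 ρ - u * s) := by
    funext s
    simp only [p2eta, p2, integral_const_mul]
  rw [hfun, integral_const_mul]
  refine h.congr_deriv ?_
  simp only [p2IntDeriv]
  field_simp
  ring

theorem statement7
    (ν : ℕ) (hν : 1 ≤ ν) (m β μ u v : ℝ) (hm : 0 < m) (hβ : 0 < β)
    (hv : 0 < v) (hvu : 0 < v - u)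
    (lam : Kspace ν → ℂ) (hmeas : Measurable lam) (hlam0 : lam 0 = 1)
    (hlam1 : ∀ k, ‖lam k‖ ≤ 1)
    (c δ : ℝ) (hδ : 0 < δ)
    (hdec : ∀ k : Kspace ν, ‖lam k‖ ≤ c / (1 + ‖k‖ ^ (max (ν : ℝ) ((ν : ℝ) / 2 + 1) + δ)))
    (ρ : ℝ) (hρ : 0 ≤ ρ) (η : ℝ) (hη : 0 ≤ η) :
    ∀ q : ℝ, 0 ≤ q → 0 < sigma0 μ v u q ρ →
      HasDerivAt (fun s : ℝ => p2eta ν m μ v u β lam s ρ η)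
        (u ^ 2 * q * (∫ k : Kspace ν, ((2 * π) ^ ν)⁻¹ *
            (‖lam k‖ ^ 2 *
              ((Real.exp (β * eE ν m μ v u lam k q ρ) - 1)⁻¹ + 1 / 2) /
                eE ν m μ v u lam k q ρ))
          + u * η ^ 2 / (fF ν m μ v 0 ρ - u * q) ^ 2 - u * q) q :=
  statement7_general ν m β μ u v hm hβ lam hmeas hlam1 c δ hδ hdec ρ η

end PB
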